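/- arXiv:2005.03693 — 2 statements merged into one kernel-verified Lean document; each statement's English description precedes it below -/
import Mathlib

section
/- The map assigning to each ≿ ∈ R̄ its normalized utility function u(≿) ∈ 𝒰̄ is continuous, and the correspondence assigning to each ≿ ∈ R̄ the set of beliefs representing it is upper hemicontinuous. Concretely: if a sequence (≿^n) in R̄ converges to ≿ ∈ R̄, then u(≿^n) converges to u(≿) in 𝒰̄; and if in addition beliefs π^n representing ≿^n converge uniformly to some π' ∈ Π, then π' represents ≿. -/
open MeasureTheory

/-- An act: a measurable map from states to outcomes. -/
abbrev Act (Ω O : Type*) [MeasurableSpace Ω] [MeasurableSpace O] : Type _ :=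
  {f : Ω → O // Measurable f}

/-- Non-atomicity of a measure relative to an explicit σ-algebra `m'`:
for every `m'`-measurable set of positive measure there is an `m'`-measurable
subset of strictly smaller positive measure. -/
def NonatomicOn {Ω : Type*} [MeasurableSpace Ω] (π : MeasureTheory.Measure Ω)
    (m' : MeasurableSpace Ω) : Prop :=
  ∀ E : Set Ω, MeasurableSet[m'] E → 0 < π E →
    ∃ F : Set Ω, MeasurableSet[m'] F ∧ F ⊆ E ∧ 0 < π F ∧ π F < π E

section Framework

variable {Ω O I : Type*} [mΩ : MeasurableSpace Ω] [mO : MeasurableSpace O]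

/-- A belief: a non-atomic (countably additive) probability measure. -/
def IsBelief (π : Measure Ω) : Prop :=
  IsProbabilityMeasure π ∧ NonatomicOn π mΩ

/-- A utility function: a bounded measurable function on outcomes. -/
def IsUtility (u : O → ℝ) : Prop :=
  Measurable u ∧ ∃ M : ℝ, ∀ x, |u x| ≤ M

/-- A normalized utility function: measurable with infimum 0 and supremum 1. -/
def NormalizedUtility (u : O → ℝ) : Prop :=
  Measurable u ∧ IsGLB (Set.range u) 0 ∧ IsLUB (Set.range u) 1

/-- Member of `𝒰̄`: normalized or identically zero. -/
def NormalizedUtilityBar (u : O → ℝ) : Prop :=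
  NormalizedUtility u ∨ u = 0

/-- Subjective expected utility of an act. -/
noncomputable def ev (π : Measure Ω) (u : O → ℝ) (f : Act Ω O) : ℝ :=
  ∫ ω, u (f.1 ω) ∂π

/-- Preference relations over acts. -/
abbrev Pref (Ω O : Type*) [MeasurableSpace Ω] [MeasurableSpace O] :=
  Act Ω O → Act Ω O → Prop

/-- `(π, u)` represents `r`: `f ≿ g` iff the expected utility of `f` is at least
that of `g`. -/
def Represents (π : Measure Ω) (u : O → ℝ) (r : Pref Ω O) : Prop :=
  ∀ f g : Act Ω O, r f g ↔ ev π u g ≤ ev π u f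

/-- A normalized representation: a belief together with a normalized (or zero)
utility function representing the relation. -/
def NormRep (π : Measure Ω) (u : O → ℝ) (r : Pref Ω O) : Prop :=
  IsBelief π ∧ NormalizedUtilityBar u ∧ Represents π u r

/-- Membership in `R̄`: the relation maximizes subjective expected utility. -/
def IsSEU (r : Pref Ω O) : Prop :=
  ∃ (π : Measure Ω) (u : O → ℝ), IsBelief π ∧ IsUtility u ∧ Represents π u r

/-- Complete indifference: the relation with empty strict part. -/
def CompletelyIndifferent (r : Pref Ω O) : Prop :=
  ∀ f g : Act Ω O, r f g

/-- `π` is a belief representing `r` (together with some utility function). -/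
def RepresentsBelief (π : Measure Ω) (r : Pref Ω O) : Prop :=
  IsBelief π ∧ ∃ u : O → ℝ, IsUtility u ∧ Represents π u r

/-- A preference profile: every agent's relation is SEU-maximizing. -/
def IsProfile (p : I → Pref Ω O) : Prop := ∀ i, IsSEU (p i)

/-- The completely indifferent relation. -/
def indiffRel : Pref Ω O := fun _ _ => True

open Classical in
/-- `p_{∼i}`: replace agent `i`'s relation by complete indifference. -/
noncomputable def updIndiff (p : I → Pref Ω O) (i : I) : I → Pref Ω O :=
  fun j => if j = i then indiffRel else p j

/-- `p_{∼{i,j}}`. -/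
noncomputable def updIndiffPair (p : I → Pref Ω O) (i j : I) : I → Pref Ω O :=
  updIndiff (updIndiff p i) j

open Classical in
/-- `I_p`: the set of concerned agents. -/
noncomputable def concerned [Fintype I] (p : I → Pref Ω O) : Finset I :=
  Finset.univ.filter fun i => ¬ CompletelyIndifferent (p i)

/-- Equivalence of utility functions: equality up to a positive affine
transformation. -/
def UEquiv (u v : O → ℝ) : Prop :=
  ∃ a : ℝ, 0 < a ∧ ∃ b : ℝ, ∀ x, u x = a * v x + b

/-- The beliefs `(πa i)_{i ∈ J}` are affinely independent. -/
def BeliefsAffIndep (J : Finset I) (πa : I → Measure Ω) : Prop :=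
  ∀ c : I → ℝ, (∑ i ∈ J, c i) = 0 →
    (∀ E : Set Ω, MeasurableSet E → (∑ i ∈ J, c i * (πa i E).toReal) = 0) →
    ∀ i ∈ J, c i = 0

/-- The utility functions `(ua i)_{i ∈ J}` are linearly independent: no
nontrivial linear combination of them is a constant function. -/
def UtilsLinIndep (J : Finset I) (ua : I → O → ℝ) : Prop :=
  ∀ c : I → ℝ, (∃ b : ℝ, ∀ x, (∑ i ∈ J, c i * ua i x) = b) → ∀ i ∈ J, c i = 0

/-- The profile has non-degenerate beliefs: the beliefs of any pair and any
triple of concerned agents are affinely independent. -/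
def NonDegenerateBeliefs [Fintype I] (p : I → Pref Ω O) (πa : I → Measure Ω) : Prop :=
  ∀ J : Finset I, J ⊆ concerned p → (J.card = 2 ∨ J.card = 3) → BeliefsAffIndep J πa

/-- The profile has non-degenerate utilities: the utility functions of any pair
and any triple of concerned agents are linearly independent. -/
def NonDegenerateUtils [Fintype I] (p : I → Pref Ω O) (ua : I → O → ℝ) : Prop :=
  ∀ J : Finset I, J ⊆ concerned p → (J.card = 2 ∨ J.card = 3) → UtilsLinIndep J ua

/-- The belief dimension of the beliefs `(πa i)_{i ∈ J}` is at least `n`. -/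
def BeliefDimAtLeast (n : ℕ) (J : Finset I) (πa : I → Measure Ω) : Prop :=
  ∃ E : Fin n → Set Ω, (∀ k, MeasurableSet (E k)) ∧
    ∀ c : Fin n → ℝ, (∀ i ∈ J, (∑ k, c k * (πa i (E k)).toReal) = 0) → ∀ k, c k = 0

/-- The utility dimension of the utility functions `(ua i)_{i ∈ J}` is at
least `n`. -/
def UtilDimAtLeast (n : ℕ) (J : Finset I) (ua : I → O → ℝ) : Prop :=
  ∃ q : Fin n → Measure O, (∀ k, IsProbabilityMeasure (q k)) ∧
    ∀ c : Fin n → ℝ, (∀ i ∈ J, (∑ k, c k * ∫ x, ua i x ∂(q k)) = 0) → ∀ k, c k = 0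

open Classical in
/-- The expected utility function of an SEU relation (via a choice of a
normalized representation). -/
noncomputable def evOf (r : Pref Ω O) : Act Ω O → ℝ :=
  if h : ∃ π : Measure Ω, ∃ u : O → ℝ, NormRep π u r then
    fun f => ev h.choose h.choose_spec.choose f
  else fun _ => 0

/-- The uniform metric on `R`. -/
noncomputable def prefDist (r r' : Pref Ω O) : ℝ :=
  ⨆ f : Act Ω O, |evOf r f - evOf r' f|

/-- Continuity of a real-valued function on `R` with respect to the uniform
metric. -/
def ContOnR (h : Pref Ω O → ℝ) : Prop :=
  ∀ r : Pref Ω O, IsSEU r → ¬ CompletelyIndifferent r →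
    ∀ ε : ℝ, 0 < ε → ∃ δ : ℝ, 0 < δ ∧
      ∀ r' : Pref Ω O, IsSEU r' → ¬ CompletelyIndifferent r' →
        prefDist r r' < δ → |h r' - h r| < ε

/-- Open sets of `R̄`: the whole space `R̄` together with the metrically open
subsets of `R`. -/
def OpenInRbar (S : Set (Pref Ω O)) : Prop :=
  S = {r | IsSEU r} ∨
    ∀ r ∈ S, IsSEU r ∧ ¬ CompletelyIndifferent r ∧
      ∃ ε : ℝ, 0 < ε ∧ ∀ r' : Pref Ω O, IsSEU r' → ¬ CompletelyIndifferent r' →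
        prefDist r r' < ε → r' ∈ S

/-- Restricted monotonicity (on a domain `D` of profiles). -/
def RestrictedMonotonicityOn (D : (I → Pref Ω O) → Prop)
    (Φ : (I → Pref Ω O) → Pref Ω O) : Prop :=
  ∀ (i : I) (p : I → Pref Ω O), D p →
    ∀ πsi πi : Measure Ω,
      RepresentsBelief πsi (Φ (updIndiff p i)) → RepresentsBelief πi (p i) →
      ∀ f g : Act Ω O,
        Φ (updIndiff p i) f g → Φ (updIndiff p i) g f →
        Measure.map f.1 πsi = Measure.map f.1 πi →
        Measure.map g.1 πsi = Measure.map g.1 πi →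
        (p i f g → Φ p f g) ∧ ((p i f g ∧ ¬ p i g f) → (Φ p f g ∧ ¬ Φ p g f))

abbrev RestrictedMonotonicity (Φ : (I → Pref Ω O) → Pref Ω O) : Prop :=
  RestrictedMonotonicityOn IsProfile Φ

/-- Faithfulness (on a domain `D`). -/
def FaithfulOn (D : (I → Pref Ω O) → Prop) (Φ : (I → Pref Ω O) → Pref Ω O) : Prop :=
  ∀ p : I → Pref Ω O, D p → (∀ i, CompletelyIndifferent (p i)) →
    CompletelyIndifferent (Φ p)

abbrev Faithful (Φ : (I → Pref Ω O) → Pref Ω O) : Prop := FaithfulOn IsProfile Φ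

/-- No belief imposition (on a domain `D`). -/
def NoBeliefImpositionOn (D : (I → Pref Ω O) → Prop)
    (Φ : (I → Pref Ω O) → Pref Ω O) : Prop :=
  ∀ (i : I) (p : I → Pref Ω O), D p →
    ¬ CompletelyIndifferent (Φ (updIndiff p i)) →
    ¬ CompletelyIndifferent (Φ p) →
    ¬ CompletelyIndifferent (p i) →
    ∀ πsi π πi : Measure Ω,
      RepresentsBelief πsi (Φ (updIndiff p i)) →
      RepresentsBelief π (Φ p) → RepresentsBelief πi (p i) →
      πsi ≠ πi → π ≠ πi

abbrev NoBeliefImposition (Φ : (I → Pref Ω O) → Pref Ω O) : Prop :=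
  NoBeliefImpositionOn IsProfile Φ

/-- Continuity of an SWF (on a domain `D`), with respect to the topology of
`R̄` and the product topology on profiles. -/
def ContinuousSWFOn (D : (I → Pref Ω O) → Prop)
    (Φ : (I → Pref Ω O) → Pref Ω O) : Prop :=
  ∀ S : Set (Pref Ω O), OpenInRbar S →
    ∀ p : I → Pref Ω O, D p → Φ p ∈ S →
      ∃ T : I → Set (Pref Ω O), (∀ i, OpenInRbar (T i)) ∧ (∀ i, p i ∈ T i) ∧
        ∀ q : I → Pref Ω O, D q → (∀ i, q i ∈ T i) → Φ q ∈ S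

abbrev ContinuousSWF (Φ : (I → Pref Ω O) → Pref Ω O) : Prop :=
  ContinuousSWFOn IsProfile Φ

/-- Anonymity (on a domain `D`). -/
def AnonymousOn (D : (I → Pref Ω O) → Prop)
    (Φ : (I → Pref Ω O) → Pref Ω O) : Prop :=
  ∀ p : I → Pref Ω O, D p → ∀ η : Equiv.Perm I, Φ (fun i => p (η i)) = Φ p

abbrev Anonymous (Φ : (I → Pref Ω O) → Pref Ω O) : Prop := AnonymousOn IsProfile Φ

/-- The regular set of acts `𝒜(ℰ', O')`. -/
def RegularActs (m' : MeasurableSpace Ω) (O' : Set O) : Set (@Act Ω O mΩ mO) :=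
  {f : @Act Ω O mΩ mO | @Measurable Ω O m' mO f.1 ∧ Set.range f.1 ⊆ O'}

/-- `𝒜(ℰ', O')` is co-redundant for `p` (with representing beliefs `πa`). -/
def CoRedundant (m' : MeasurableSpace Ω) (O' : Set O)
    (p : I → @Pref Ω O mΩ mO) (πa : I → @MeasureTheory.Measure Ω mΩ) : Prop :=
  (∀ f : @Act Ω O mΩ mO, ∃ g ∈ @RegularActs Ω O mΩ mO m' O', ∀ i, p i f g ∧ p i g f) ∧
  (∀ i, @NonatomicOn Ω mΩ (πa i) m')

/-- Independence of redundant acts (on a domain `D`). -/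
def IndepRedundantActsOn (D : (I → Pref Ω O) → Prop)
    (Φ : (I → Pref Ω O) → Pref Ω O) : Prop :=
  ∀ (p p' : I → Pref Ω O) (πa πa' : I → Measure Ω),
    D p → D p' →
    (∀ i, RepresentsBelief (πa i) (p i)) →
    (∀ i, RepresentsBelief (πa' i) (p' i)) →
    ∀ (m' : {m : MeasurableSpace Ω // m ≤ mΩ}) (O' : Set O),
      CoRedundant m'.1 O' p πa → CoRedundant m'.1 O' p' πa' →
      (∀ i : I, ∀ f ∈ RegularActs m'.1 O', ∀ g ∈ RegularActs m'.1 O',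
        (p i f g ↔ p' i f g)) →
      ∀ f ∈ RegularActs m'.1 O', ∀ g ∈ RegularActs m'.1 O',
        (Φ p f g ↔ Φ p' f g)

abbrev IndepRedundantActs (Φ : (I → Pref Ω O) → Pref Ω O) : Prop :=
  IndepRedundantActsOn IsProfile Φ

/-- The weighted average of the concerned agents' beliefs with weights `v`. -/
noncomputable def mixBelief [Fintype I] (p : I → Pref Ω O) (πa : I → Measure Ω)
    (v : I → ℝ) : Measure Ω :=
  (ENNReal.ofReal ((∑ i ∈ concerned p, v i)⁻¹)) •
    ∑ i ∈ concerned p, ENNReal.ofReal (v i) • πa i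

/-- The weighted sum of the concerned agents' utility functions with weights
`w`. -/
noncomputable def mixUtil [Fintype I] (p : I → Pref Ω O) (ua : I → O → ℝ)
    (w : I → ℝ) : O → ℝ :=
  fun x => ∑ i ∈ concerned p, w i * ua i x

/-- A common utility profile: every concerned agent's normalized utility
function is equivalent to `u` or to `-u` for a single `u ∈ 𝒰`. -/
def CommonUtilityProfile [Fintype I] (p : I → Pref Ω O) (ua : I → O → ℝ) : Prop :=
  ∃ u : O → ℝ, NormalizedUtility u ∧
    ∀ i ∈ concerned p, UEquiv (ua i) u ∨ UEquiv (ua i) (fun x => - u x)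

end Framework

/-! Constant acts reveal the utility function, and two-outcome bets on an event `E` reveal the
probability of `E` once two outcomes of different utility are known. So uniform convergence of
expected utilities forces uniform convergence of utilities, and identifies any uniform limit of
the beliefs with the belief of the limit relation. -/

open Filter Topology

namespace Act

variable {Ω O : Type*} [MeasurableSpace Ω] [MeasurableSpace O]

def const (x : O) : Act Ω O := ⟨fun _ => x, measurable_const⟩

def piecewise (E : Set Ω) [DecidablePred (· ∈ E)] (hE : MeasurableSet E) (x y : O) :
    Act Ω O :=
  ⟨E.piecewise (fun _ => x) (fun _ => y), measurable_const.piecewise hE measurable_const⟩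

end Act

section SEU

variable {Ω O : Type*} [MeasurableSpace Ω] [MeasurableSpace O]

theorem ev_const (π : Measure Ω) [IsProbabilityMeasure π] (u : O → ℝ) (x : O) :
    ev π u (Act.const x) = u x := by
  simp [ev, Act.const]

theorem ev_piecewise (π : Measure Ω) [IsProbabilityMeasure π] (u : O → ℝ) {E : Set Ω}
    [DecidablePred (· ∈ E)] (hE : MeasurableSet E) (x y : O) :
    ev π u (Act.piecewise E hE x y) = (u x - u y) * (π E).toReal + u y := by
  have h : (fun ω => u (E.piecewise (fun _ => x) (fun _ => y) ω))
      = fun ω => E.indicator (fun _ => u x - u y) ω + u y := by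
    funext ω
    by_cases hω : ω ∈ E <;> simp [hω]
  change ∫ ω, u (E.piecewise (fun _ => x) (fun _ => y) ω) ∂π = _
  rw [h, integral_add ((integrable_const _).indicator hE) (integrable_const _),
    integral_indicator_const _ hE, integral_const]
  simp [mul_comm, Measure.real]

theorem NormalizedUtility.isUtility {u : O → ℝ} (hu : NormalizedUtility u) : IsUtility u :=
  ⟨hu.1, 1, fun x => abs_le.2
    ⟨by linarith [hu.2.1.1 (Set.mem_range_self x)], hu.2.2.1 (Set.mem_range_self x)⟩⟩

theorem NormalizedUtility.exists_ne {u : O → ℝ} (hu : NormalizedUtility u) :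
    ∃ x y, u x ≠ u y := by
  obtain ⟨_, ⟨x, rfl⟩⟩ := hu.2.2.nonempty
  by_contra! hconst
  have hrange : Set.range u = {u x} :=
    Set.eq_singleton_iff_unique_mem.2 ⟨Set.mem_range_self x, fun _ ⟨y, hy⟩ => hy ▸ hconst y x⟩
  have h0 : (0 : ℝ) = u x := (hrange ▸ hu.2.1).unique isGLB_singleton
  have h1 : (1 : ℝ) = u x := (hrange ▸ hu.2.2).unique isLUB_singleton
  linarith

theorem Represents.completelyIndifferent_of_eq_zero {π : Measure Ω} {r : Pref Ω O}
    (h : Represents π (0 : O → ℝ) r) : CompletelyIndifferent r := fun f g => by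
  simp [h f g, ev]

theorem Represents.not_completelyIndifferent {π : Measure Ω} [IsProbabilityMeasure π]
    {u : O → ℝ} {r : Pref Ω O} (hu : NormalizedUtility u) (h : Represents π u r) :
    ¬ CompletelyIndifferent r := fun hCI => by
  obtain ⟨x, y, hxy⟩ := hu.exists_ne
  have hxy' := (h (Act.const x) (Act.const y)).1 (hCI _ _)
  have hyx := (h (Act.const y) (Act.const x)).1 (hCI _ _)
  simp only [ev_const] at hxy' hyx
  exact hxy (le_antisymm hyx hxy')

theorem NormRep.completelyIndifferent_iff {π : Measure Ω} {u : O → ℝ} {r : Pref Ω O}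
    (h : NormRep π u r) : CompletelyIndifferent r ↔ u = 0 := by
  have := h.1.1
  refine ⟨fun hCI => h.2.1.resolve_left fun hu => ?_, fun hu => ?_⟩
  · exact h.2.2.not_completelyIndifferent hu hCI
  · exact (hu ▸ h.2.2).completelyIndifferent_of_eq_zero

theorem IsBelief.representsBelief_of_completelyIndifferent {π : Measure Ω} {r : Pref Ω O}
    (hπ : IsBelief π) (hr : CompletelyIndifferent r) : RepresentsBelief π r :=
  ⟨hπ, 0, ⟨measurable_const, 0, by simp⟩, fun f g => by simp [ev, hr f g]⟩

theorem measure_eq_of_tendsto_ev {πn : ℕ → Measure Ω} {un : ℕ → O → ℝ} {π π' : Measure Ω}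
    {u : O → ℝ} [∀ n, IsProbabilityMeasure (πn n)] [IsProbabilityMeasure π]
    [IsFiniteMeasure π'] (hu : ∃ x y, u x ≠ u y)
    (hev : ∀ f : Act Ω O, Tendsto (fun n => ev (πn n) (un n) f) atTop (𝓝 (ev π u f)))
    (hπ : ∀ E, MeasurableSet E → Tendsto (fun n => (πn n E).toReal) atTop (𝓝 (π' E).toReal)) :
    π' = π := by
  classical
  obtain ⟨x, y, hxy⟩ := hu
  have hun : ∀ z, Tendsto (fun n => un n z) atTop (𝓝 (u z)) := fun z => by
    simpa only [ev_const] using hev (Act.const z)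
  ext E hE
  have hbet := hev (Act.piecewise E hE x y)
  simp only [ev_piecewise _ _ hE] at hbet
  have hlim := tendsto_nhds_unique hbet ((((hun x).sub (hun y)).mul (hπ E hE)).add (hun y))
  have hreal : (π' E).toReal = (π E).toReal :=
    (mul_left_cancel₀ (sub_ne_zero.2 hxy) (add_right_cancel hlim)).symm
  exact (ENNReal.toReal_eq_toReal_iff' (measure_ne_top π' E) (measure_ne_top π E)).1 hreal

end SEU

theorem stmt9_general {Ω O : Type*} [mΩ : MeasurableSpace Ω] [mO : MeasurableSpace O]
    (rn : ℕ → Pref Ω O) (r : Pref Ω O)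
    (πn : ℕ → Measure Ω) (un : ℕ → O → ℝ)
    (hn : ∀ n, NormRep (πn n) (un n) (rn n))
    (πL : Measure Ω) (uL : O → ℝ) (hL : NormRep πL uL r)
    (hconv : CompletelyIndifferent r ∨
      ∀ ε : ℝ, 0 < ε → ∃ N : ℕ, ∀ n ≥ N, ¬ CompletelyIndifferent (rn n) ∧
        ∀ f : Act Ω O, |ev (πn n) (un n) f - ev πL uL f| < ε) :
    (uL = 0 ∨
      ∀ ε : ℝ, 0 < ε → ∃ N : ℕ, ∀ n ≥ N, un n ≠ 0 ∧
        ∀ x : O, |un n x - uL x| < ε) ∧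
    (∀ π' : Measure Ω, IsBelief π' →
      (∀ ε : ℝ, 0 < ε → ∃ N : ℕ, ∀ n ≥ N, ∀ E : Set Ω, MeasurableSet E →
        |(πn n E).toReal - (π' E).toReal| < ε) →
      RepresentsBelief π' r) := by
  have := hL.1.1
  have := fun n => (hn n).1.1
  by_cases hCI : CompletelyIndifferent r
  · exact ⟨.inl (hL.completelyIndifferent_iff.1 hCI),
      fun π' hπ' _ => hπ'.representsBelief_of_completelyIndifferent hCI⟩
  replace hconv := hconv.resolve_left hCI
  have huL : NormalizedUtility uL := hL.2.1.resolve_right (mt hL.completelyIndifferent_iff.2 hCI)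
  refine ⟨.inr fun ε hε => (hconv ε hε).imp fun N hN n hnN => ⟨?_, fun x => ?_⟩,
    fun π' hπ' hπconv => ?_⟩
  · exact mt (hn n).completelyIndifferent_iff.2 (hN n hnN).1
  · simpa only [ev_const] using (hN n hnN).2 (Act.const x)
  have := hπ'.1
  have hπ'L : π' = πL := measure_eq_of_tendsto_ev huL.exists_ne
    (fun f => Metric.tendsto_atTop.2 fun ε hε =>
      (hconv ε hε).imp fun N hN n hnN => (hN n hnN).2 f)
    (fun E hE => Metric.tendsto_atTop.2 fun ε hε =>
      (hπconv ε hε).imp fun N hN n hnN => hN n hnN E hE)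
  subst hπ'L
  exact ⟨hπ', uL, huL.isUtility, hL.2.2⟩

theorem stmt9 {Ω O : Type*} [mΩ : MeasurableSpace Ω] [mO : MeasurableSpace O]
    (hO : 4 ≤ Cardinal.mk O)
    (rn : ℕ → Pref Ω O) (r : Pref Ω O)
    (πn : ℕ → Measure Ω) (un : ℕ → O → ℝ)
    (hn : ∀ n, NormRep (πn n) (un n) (rn n))
    (πL : Measure Ω) (uL : O → ℝ) (hL : NormRep πL uL r)
    (hconv : CompletelyIndifferent r ∨
      ∀ ε : ℝ, 0 < ε → ∃ N : ℕ, ∀ n ≥ N, ¬ CompletelyIndifferent (rn n) ∧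
        ∀ f : Act Ω O, |ev (πn n) (un n) f - ev πL uL f| < ε) :
    (uL = 0 ∨
      ∀ ε : ℝ, 0 < ε → ∃ N : ℕ, ∀ n ≥ N, un n ≠ 0 ∧
        ∀ x : O, |un n x - uL x| < ε) ∧
    (∀ π' : Measure Ω, IsBelief π' →
      (∀ ε : ℝ, 0 < ε → ∃ N : ℕ, ∀ n ≥ N, ∀ E : Set Ω, MeasurableSet E →
        |(πn n E).toReal - (π' E).toReal| < ε) →
      RepresentsBelief π' r) :=
  stmt9_general (mΩ := mΩ) (mO := mO) rn r πn un hn πL uL hL hconv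
end

section
/- Let π and π' be non-atomic countably additive probability measures on a measurable space (Ω, ℰ). Then there is a sub-sigma-algebra ℰ' ⊆ ℰ such that π(E) = π'(E) for all E ∈ ℰ', and the restriction of π to ℰ' is non-atomic on the measurable space (Ω, ℰ'). -/
/-!
`π + π'` is non-atomic, so by Sierpiński's theorem it can halve any set. Sliding a window of half
the `(π + π')`-measure along a chain of subsets of a set `A` on which `π` and `π'` agree, the
intermediate value theorem finds a subset of `A` with half the `π`-measure on which `π` and `π'`
still agree. Halving repeatedly gives a dyadic chain of sets of agreement, which fills out to a
monotone family `C s`, `s ∈ [0, 1]`, with `π (C s) = π' (C s) = s`. Its sets form a π-system, so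
`π = π'` on the σ-algebra they generate; and for `E` in that σ-algebra, the intermediate value
theorem once more gives some `E ∩ C s` of measure `π E / 2`.
-/

open MeasureTheory

open Set Filter Topology MeasurableSpace
open scoped ENNReal

def interleave {α : Type*} (f g : ℕ → Set α) (k : ℕ) : Set α :=
  if Even k then f (k / 2) else f (k / 2) ∪ g (k / 2)

section Interleave

variable {α : Type*} {f g : ℕ → Set α}

@[simp] lemma interleave_two_mul (j : ℕ) : interleave f g (2 * j) = f j := by
  simp [interleave]

@[simp] lemma interleave_two_mul_add_one (j : ℕ) : interleave f g (2 * j + 1) = f j ∪ g j := by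
  simp [interleave, show (2 * j + 1) / 2 = j by omega]

end Interleave

lemma Monotone.isPiSystem_range {α ι : Type*} [LinearOrder ι] {C : ι → Set α}
    (hC : Monotone C) : IsPiSystem (range C) := by
  rintro _ ⟨s, rfl⟩ _ ⟨t, rfl⟩ -
  rcases le_total s t with hst | hts
  · exact ⟨s, (inter_eq_left.2 (hC hst)).symm⟩
  · exact ⟨t, (inter_eq_right.2 (hC hts)).symm⟩

section

variable {Ω : Type*} [m : MeasurableSpace Ω]

lemma exists_greedy_extension {μ : Measure Ω} {A G : Set Ω} {t : ℝ≥0∞} (ht : t ≠ ∞)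
    (hG : MeasurableSet G) (hGA : G ⊆ A) (hGt : μ G ≤ t) :
    ∃ G', MeasurableSet G' ∧ G ⊆ G' ∧ G' ⊆ A ∧ μ G' ≤ t ∧
      ∀ D, MeasurableSet D → D ⊆ A \ G → μ G + μ D ≤ t → μ G + μ D / 2 ≤ μ G' := by
  set δ := ⨆ (D : Set Ω) (_ : MeasurableSet D ∧ D ⊆ A \ G ∧ μ G + μ D ≤ t), μ D with hδ_def
  have hle_δ : ∀ D, MeasurableSet D → D ⊆ A \ G → μ G + μ D ≤ t → μ D ≤ δ :=
    fun D hD hDA hDt => le_iSup₂_of_le D ⟨hD, hDA, hDt⟩ le_rfl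
  rcases eq_or_ne δ 0 with hδ | hδ
  · refine ⟨G, hG, subset_rfl, hGA, hGt, fun D hD hDA hDt => ?_⟩
    simp [nonpos_iff_eq_zero.1 (hδ ▸ hle_δ D hD hDA hDt)]
  have hδt : δ ≠ ∞ := ne_top_of_le_ne_top ht (iSup₂_le fun D hD => le_add_self.trans hD.2.2)
  obtain ⟨D₀, ⟨hD₀, hD₀A, hD₀t⟩, hD₀δ⟩ :
      ∃ D, (MeasurableSet D ∧ D ⊆ A \ G ∧ μ G + μ D ≤ t) ∧ δ / 2 < μ D := by
    simpa only [hδ_def, lt_iSup_iff, exists_prop] using ENNReal.half_lt_self hδ hδt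
  have hdisj : Disjoint G D₀ := (subset_sdiff.1 hD₀A).2.symm
  refine ⟨G ∪ D₀, hG.union hD₀, subset_union_left, union_subset hGA (hD₀A.trans sdiff_subset),
    by rwa [measure_union hdisj hD₀], fun D hD hDA hDt => ?_⟩
  rw [measure_union hdisj hD₀]
  gcongr
  exact (ENNReal.div_le_div_right (hle_δ D hD hDA hDt) 2).trans hD₀δ.le

namespace NonatomicOn

variable {μ ν : Measure Ω} {A : Set Ω}

lemma exists_subset_add_lt [IsFiniteMeasure ν] (hμ : NonatomicOn μ m)
    (hA : MeasurableSet A) (hpos : 0 < μ A) :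
    ∃ F, MeasurableSet F ∧ F ⊆ A ∧ 0 < (μ + ν) F ∧ (μ + ν) F < (μ + ν) A := by
  obtain ⟨F, hF, hFA, hF0, hFA'⟩ := hμ A hA hpos
  refine ⟨F, hF, hFA, hF0.trans_le le_self_add, ?_⟩
  simp only [Measure.add_apply]
  exact ENNReal.add_lt_add_of_lt_of_le (measure_ne_top ν F) hFA' (measure_mono hFA)

lemma add [IsFiniteMeasure μ] [IsFiniteMeasure ν] (hμ : NonatomicOn μ m)
    (hν : NonatomicOn ν m) : NonatomicOn (μ + ν) m := by
  intro A hA hpos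
  rcases add_pos_iff.1 (Measure.add_apply μ ν A ▸ hpos) with h | h
  · exact hμ.exists_subset_add_lt hA h
  · rw [add_comm μ ν]
    exact hν.exists_subset_add_lt hA h

lemma exists_subset_pos_le_half [IsFiniteMeasure μ] (hμ : NonatomicOn μ m)
    (hA : MeasurableSet A) (hpos : 0 < μ A) :
    ∃ F, MeasurableSet F ∧ F ⊆ A ∧ 0 < μ F ∧ μ F ≤ 2⁻¹ * μ A := by
  obtain ⟨F, hF, hFA, hF0, hFA'⟩ := hμ A hA hpos
  by_cases hle : μ F ≤ 2⁻¹ * μ A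
  · exact ⟨F, hF, hFA, hF0, hle⟩
  have hdiff : μ (A \ F) = μ A - μ F := measure_sdiff hFA hF.nullMeasurableSet (measure_ne_top μ F)
  refine ⟨A \ F, hA.diff hF, sdiff_subset, hdiff ▸ tsub_pos_of_lt hFA', ?_⟩
  rw [hdiff, tsub_le_iff_right]
  calc μ A = 2⁻¹ * μ A + 2⁻¹ * μ A := by rw [← add_mul, ENNReal.inv_two_add_inv_two, one_mul]
    _ ≤ 2⁻¹ * μ A + μ F := by gcongr; exact (not_le.1 hle).le

lemma exists_subset_pos_le [IsFiniteMeasure μ] (hμ : NonatomicOn μ m) (hA : MeasurableSet A)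
    (hpos : 0 < μ A) {ε : ℝ≥0∞} (hε : 0 < ε) :
    ∃ F, MeasurableSet F ∧ F ⊆ A ∧ 0 < μ F ∧ μ F ≤ ε := by
  have halving : ∀ n : ℕ, ∃ F, MeasurableSet F ∧ F ⊆ A ∧ 0 < μ F ∧ μ F ≤ 2⁻¹ ^ n * μ A := by
    intro n
    induction n with
    | zero => exact ⟨A, hA, subset_rfl, hpos, by simp⟩
    | succ n ih =>
      obtain ⟨F, hF, hFA, hF0, hFle⟩ := ih
      obtain ⟨G, hG, hGF, hG0, hGle⟩ := hμ.exists_subset_pos_le_half hF hF0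
      refine ⟨G, hG, hGF.trans hFA, hG0, hGle.trans ?_⟩
      rw [pow_succ', mul_assoc]
      gcongr
  have hlim : Tendsto (fun n : ℕ => 2⁻¹ ^ n * μ A) atTop (𝓝 0) := by
    simpa using ENNReal.Tendsto.mul_const
      (ENNReal.tendsto_pow_atTop_nhds_zero_of_lt_one (by norm_num)) (Or.inr (measure_ne_top μ A))
  obtain ⟨n, hn⟩ := (hlim.eventually (gt_mem_nhds hε)).exists
  obtain ⟨F, hF, hFA, hF0, hFle⟩ := halving n
  exact ⟨F, hF, hFA, hF0, hFle.trans hn.le⟩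

theorem exists_subset_measure_eq [IsFiniteMeasure μ] (hμ : NonatomicOn μ m)
    (hA : MeasurableSet A) {t : ℝ≥0∞} (ht : t ≤ μ A) :
    ∃ F, MeasurableSet F ∧ F ⊆ A ∧ μ F = t := by
  have htop : t ≠ ∞ := ne_top_of_le_ne_top (measure_ne_top μ A) ht
  let Adm := {G : Set Ω // MeasurableSet G ∧ G ⊆ A ∧ μ G ≤ t}
  choose next hnext hsub hnextA hnextt hgrow using
    fun G : Adm => exists_greedy_extension htop G.2.1 G.2.2.1 G.2.2.2
  let seq : ℕ → Adm := fun n => Nat.rec ⟨∅, .empty, empty_subset A, by simp⟩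
    (fun _ G => ⟨next G, hnext G, hnextA G, hnextt G⟩) n
  have hmono : Monotone fun n => (seq n).1 := monotone_nat_of_le_succ fun n => hsub (seq n)
  set G := ⋃ n, (seq n).1
  have hseqG : ∀ n, (seq n).1 ⊆ G := subset_iUnion fun n => (seq n).1
  have hGt : μ G ≤ t := by
    rw [hmono.measure_iUnion]
    exact iSup_le fun n => (seq n).2.2.2
  refine ⟨G, .iUnion fun n => (seq n).2.1, iUnion_subset fun n => (seq n).2.2.1,
    hGt.antisymm (not_lt.1 fun hlt => ?_)⟩
  -- a small piece of `A \ G` could still be added at every stage, forcing `μ (seq n)` past `t`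
  have hgap : 0 < t - μ G := tsub_pos_of_lt hlt
  obtain ⟨D, hD, hDA, hD0, hDt⟩ := hμ.exists_subset_pos_le (hA.diff (.iUnion fun n => (seq n).2.1))
    (hgap.trans_le ((tsub_le_tsub_right ht _).trans (le_measure_sdiff))) hgap
  have hstep : ∀ n, μ (seq n).1 + μ D / 2 ≤ μ (seq (n + 1)).1 := fun n =>
    hgrow (seq n) D hD (hDA.trans (sdiff_subset_sdiff_right (hseqG n)))
      ((add_le_add (measure_mono (hseqG n)) hDt).trans (add_tsub_cancel_of_le hlt.le).le)
  have hlin : ∀ n : ℕ, n * (μ D / 2) ≤ t := fun n => by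
    refine le_trans ?_ (seq n).2.2.2
    induction n with
    | zero => simp
    | succ n ih => rw [Nat.cast_succ, add_one_mul]; exact (add_le_add ih le_rfl).trans (hstep n)
  have hD2 : μ D / 2 ≠ 0 := (ENNReal.div_pos hD0.ne' (by norm_num)).ne'
  obtain ⟨n, hn⟩ := ENNReal.exists_nat_mul_gt hD2 htop
  exact not_lt.2 (hlin n) hn

lemma exists_subset_measureReal_eq_half [IsFiniteMeasure μ] (hμ : NonatomicOn μ m)
    (hA : MeasurableSet A) : ∃ D ⊆ A, MeasurableSet D ∧ μ.real D = μ.real A / 2 := by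
  obtain ⟨D, hD, hDA, hDeq⟩ := hμ.exists_subset_measure_eq hA ENNReal.half_le_self
  exact ⟨D, hDA, hD, by simp [measureReal_def, hDeq, ENNReal.toReal_div]⟩

end NonatomicOn

def JointlyHalvable (κ₁ κ₂ : Measure Ω) : Prop :=
  ∀ S, MeasurableSet S → κ₁.real S = κ₂.real S →
    ∃ D ⊆ S, MeasurableSet D ∧ κ₁.real D = κ₂.real D ∧ κ₁.real D = κ₁.real S / 2

structure IsDyadicLevel (κ₁ κ₂ : Measure Ω) (A : Set Ω) (n : ℕ) (f : ℕ → Set Ω) : Prop where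
  measurableSet : ∀ k, MeasurableSet (f k)
  mono : Monotone f
  zero : f 0 = ∅
  pow : f (2 ^ n) = A
  measureReal_eq : ∀ k ≤ 2 ^ n, κ₁.real (f k) = k / 2 ^ n * κ₁.real A
  agree : ∀ k, κ₁.real (f k) = κ₂.real (f k)

namespace IsDyadicLevel

variable {κ₁ κ₂ : Measure Ω} {A : Set Ω} {n : ℕ} {f : ℕ → Set Ω}

lemma measureReal_sdiff_succ (hf : IsDyadicLevel κ₁ κ₂ A n f) (κ : Measure Ω) [IsFiniteMeasure κ]
    (j : ℕ) : κ.real (f (j + 1) \ f j) = κ.real (f (j + 1)) - κ.real (f j) :=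
  measureReal_sdiff (hf.mono j.le_succ) (hf.measurableSet j)

variable [IsFiniteMeasure κ₁] [IsFiniteMeasure κ₂]

lemma interleave {D : ℕ → Set Ω} (hf : IsDyadicLevel κ₁ κ₂ A n f)
    (hD : ∀ j, D j ⊆ f (j + 1) \ f j ∧ MeasurableSet (D j) ∧ κ₁.real (D j) = κ₂.real (D j) ∧
      κ₁.real (D j) = κ₁.real (f (j + 1) \ f j) / 2) :
    IsDyadicLevel κ₁ κ₂ A (n + 1) (interleave f D) := by
  have hdisj : ∀ j, Disjoint (f j) (D j) := fun j => disjoint_sdiff_right.mono_right (hD j).1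
  have hunion : ∀ (κ : Measure Ω) [IsFiniteMeasure κ] (j : ℕ),
      κ.real (f j ∪ D j) = κ.real (f j) + κ.real (D j) :=
    fun κ _ j => measureReal_union (hdisj j) (hD j).2.1
  refine ⟨fun k => ?_, monotone_nat_of_le_succ fun k => ?_,
    (interleave_two_mul (g := D) 0).trans hf.zero, by rw [pow_succ', interleave_two_mul, hf.pow],
    fun k hk => ?_, fun k => ?_⟩ <;>
    obtain ⟨j, rfl | rfl⟩ := Nat.even_or_odd' k
  · simpa using hf.measurableSet j
  · simpa using (hf.measurableSet j).union (hD j).2.1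
  · simp
  · rw [show 2 * j + 1 + 1 = 2 * (j + 1) by ring, interleave_two_mul_add_one, interleave_two_mul]
    exact union_subset (hf.mono j.le_succ) ((hD j).1.trans sdiff_subset)
  · rw [interleave_two_mul, hf.measureReal_eq j (by rw [pow_succ'] at hk; omega)]
    push_cast
    rw [pow_succ']
    field_simp
  · have hj : j < 2 ^ n := by rw [pow_succ'] at hk; omega
    rw [interleave_two_mul_add_one, hunion, (hD j).2.2.2, hf.measureReal_sdiff_succ,
      hf.measureReal_eq j hj.le, hf.measureReal_eq (j + 1) hj]
    push_cast
    rw [pow_succ']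
    field_simp
    ring
  · simpa using hf.agree j
  · rw [interleave_two_mul_add_one, hunion, hunion, hf.agree j, (hD j).2.2.1]

lemma exists_succ (hf : IsDyadicLevel κ₁ κ₂ A n f) (hsplit : JointlyHalvable κ₁ κ₂) :
    ∃ g, IsDyadicLevel κ₁ κ₂ A (n + 1) g ∧ ∀ k, g (2 * k) = f k := by
  choose D hDsub hD hDagree hDhalf using fun j => hsplit (f (j + 1) \ f j)
    ((hf.measurableSet _).diff (hf.measurableSet _))
    (by rw [hf.measureReal_sdiff_succ, hf.measureReal_sdiff_succ, hf.agree, hf.agree])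
  exact ⟨_, hf.interleave fun j => ⟨hDsub j, hD j, hDagree j, hDhalf j⟩, interleave_two_mul⟩

end IsDyadicLevel

lemma isDyadicLevel_zero {κ₁ κ₂ : Measure Ω} {A : Set Ω} (hA : MeasurableSet A)
    (hAeq : κ₁.real A = κ₂.real A) :
    IsDyadicLevel κ₁ κ₂ A 0 fun k => if k = 0 then ∅ else A := by
  refine ⟨fun k => ?_, fun k l hkl => ?_, rfl, rfl, fun k hk => ?_, fun k => ?_⟩
  · split_ifs <;> simp [hA]
  · split_ifs <;> first | exact empty_subset _ | exact subset_rfl | omega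
  · interval_cases k <;> simp
  · split_ifs <;> simp [hAeq]

lemma exists_dyadicLevels {κ₁ κ₂ : Measure Ω} [IsFiniteMeasure κ₁] [IsFiniteMeasure κ₂]
    (hsplit : JointlyHalvable κ₁ κ₂) {A : Set Ω} (hA : MeasurableSet A)
    (hAeq : κ₁.real A = κ₂.real A) :
    ∃ T : ℕ → ℕ → Set Ω, (∀ n, IsDyadicLevel κ₁ κ₂ A n (T n)) ∧
      ∀ n k, T (n + 1) (2 * k) = T n k := by
  choose next hnext hnext_two_mul using
    fun n (f : ℕ → Set Ω) (hf : IsDyadicLevel κ₁ κ₂ A n f) => hf.exists_succ hsplit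
  let T : (n : ℕ) → {f // IsDyadicLevel κ₁ κ₂ A n f} := fun n =>
    Nat.rec ⟨_, isDyadicLevel_zero hA hAeq⟩ (fun n f => ⟨next n f.1 f.2, hnext n f.1 f.2⟩) n
  exact ⟨fun n => (T n).1, fun n => (T n).2, fun n => hnext_two_mul n _ (T n).2⟩

structure IsProportionalChain (μ : Measure Ω) (A : Set Ω) (C : ℝ → Set Ω) : Prop where
  mono : Monotone C
  measurableSet : ∀ s, MeasurableSet (C s)
  zero : C 0 = ∅
  one : C 1 = A
  measureReal_eq : ∀ s ∈ Icc (0 : ℝ) 1, μ.real (C s) = s * μ.real A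

lemma two_mul_floor_le_floor_mul_two_pow_succ (s : ℝ) (n : ℕ) :
    2 * ⌊s * 2 ^ n⌋₊ ≤ ⌊s * 2 ^ (n + 1)⌋₊ := by
  rcases le_or_gt s 0 with hs | hs
  · simp [Nat.floor_eq_zero.2 (by nlinarith [pow_pos (two_pos (α := ℝ)) n] : s * 2 ^ n < 1)]
  refine Nat.le_floor ?_
  push_cast
  rw [pow_succ]
  nlinarith [Nat.floor_le (by positivity : 0 ≤ s * 2 ^ n)]

theorem JointlyHalvable.exists_isProportionalChain {κ₁ κ₂ : Measure Ω} [IsFiniteMeasure κ₁]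
    [IsFiniteMeasure κ₂] (hsplit : JointlyHalvable κ₁ κ₂) {A : Set Ω} (hA : MeasurableSet A)
    (hAeq : κ₁.real A = κ₂.real A) :
    ∃ C, IsProportionalChain κ₁ A C ∧ ∀ s, κ₁.real (C s) = κ₂.real (C s) := by
  obtain ⟨T, hT, hT_two_mul⟩ := exists_dyadicLevels hsplit hA hAeq
  let C : ℝ → Set Ω := fun s => ⋃ n, T n ⌊s * 2 ^ n⌋₊
  have hlim : ∀ (κ : Measure Ω) [IsFiniteMeasure κ] (s : ℝ),
      Tendsto (fun n => κ.real (T n ⌊s * 2 ^ n⌋₊)) atTop (𝓝 (κ.real (C s))) := by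
    intro κ _ s
    refine (ENNReal.tendsto_toReal (measure_ne_top κ _)).comp (tendsto_measure_iUnion_atTop ?_)
    refine monotone_nat_of_le_succ fun n => ?_
    rw [← hT_two_mul]
    exact (hT (n + 1)).mono (two_mul_floor_le_floor_mul_two_pow_succ s n)
  refine ⟨C, ⟨fun s t hst => iUnion_mono fun n => (hT n).mono (Nat.floor_le_floor (by gcongr)),
    fun s => .iUnion fun n => (hT n).measurableSet _, by simp [C, (hT _).zero],
    ?_, fun s hs => ?_⟩, fun s => ?_⟩
  · have hfloor (n : ℕ) : ⌊(1 : ℝ) * 2 ^ n⌋₊ = 2 ^ n := by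
      simpa using Nat.floor_natCast (R := ℝ) (2 ^ n)
    simp only [C, hfloor, (hT _).pow, iUnion_const]
  · have hfloor : Tendsto (fun n : ℕ => (⌊s * 2 ^ n⌋₊ : ℝ) / 2 ^ n) atTop (𝓝 s) :=
      (tendsto_nat_floor_mul_div_atTop hs.1).comp
        (tendsto_pow_atTop_atTop_of_one_lt one_lt_two)
    refine tendsto_nhds_unique (hlim κ₁ s) ((hfloor.mul_const (κ₁.real A)).congr fun n => ?_)
    refine ((hT n).measureReal_eq _ (Nat.floor_le_of_le ?_)).symm
    exact_mod_cast mul_le_of_le_one_left (by positivity) hs.2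
  · exact tendsto_nhds_unique (hlim κ₁ s) ((hlim κ₂ s).congr fun n => ((hT n).agree _).symm)

namespace IsProportionalChain

variable {μ ρ : Measure Ω} [IsFiniteMeasure μ] {A : Set Ω} {C : ℝ → Set Ω}

lemma measureReal_sdiff (hC : IsProportionalChain μ A C) {s t : ℝ} (hs : 0 ≤ s) (hst : s ≤ t)
    (ht : t ≤ 1) : μ.real (C t \ C s) = (t - s) * μ.real A := by
  rw [MeasureTheory.measureReal_sdiff (hC.mono hst) (hC.measurableSet s),
    hC.measureReal_eq t ⟨hs.trans hst, ht⟩, hC.measureReal_eq s ⟨hs, hst.trans ht⟩]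
  ring

lemma continuousOn_measureReal (hC : IsProportionalChain μ A C) (hρ : ρ ≤ μ) :
    ContinuousOn (fun s => ρ.real (C s)) (Icc 0 1) := by
  have : IsFiniteMeasure ρ := isFiniteMeasure_of_le μ hρ
  refine (LipschitzOnWith.of_le_add_mul' (μ.real A) fun s hs t ht => ?_).continuousOn
  rcases le_total s t with hst | hts
  · exact (measureReal_mono (hC.mono hst)).trans
      (le_add_of_nonneg_right (mul_nonneg measureReal_nonneg dist_nonneg))
  · have hle : ρ.real (C s \ C t) ≤ μ.real (C s \ C t) :=
      ENNReal.toReal_mono (measure_ne_top μ _) (hρ _)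
    rw [MeasureTheory.measureReal_sdiff (hC.mono hts) (hC.measurableSet t),
      hC.measureReal_sdiff ht.1 hts hs.2] at hle
    rw [Real.dist_eq, abs_of_nonneg (sub_nonneg.2 hts)]
    linarith

end IsProportionalChain

theorem NonatomicOn.jointlyHalvable {ρ₁ ρ₂ : Measure Ω} [IsFiniteMeasure ρ₁] [IsFiniteMeasure ρ₂]
    (hna : NonatomicOn (ρ₁ + ρ₂) m) : JointlyHalvable ρ₁ ρ₂ := by
  intro A hA hAeq
  have hμ : JointlyHalvable (ρ₁ + ρ₂) (ρ₁ + ρ₂) := fun S hS _ =>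
    let ⟨D, hDS, hD, hDeq⟩ := hna.exists_subset_measureReal_eq_half hS
    ⟨D, hDS, hD, rfl, hDeq⟩
  obtain ⟨C, hC, -⟩ := hμ.exists_isProportionalChain hA rfl
  -- slide a window of `(ρ₁ + ρ₂)`-measure `1/2` along `C` until it is fair to `ρ₁` and `ρ₂`
  let window : Measure Ω → ℝ → ℝ := fun ρ s => ρ.real (C (s + 2⁻¹)) - ρ.real (C s)
  have hwindow : ∀ ρ ≤ ρ₁ + ρ₂, ContinuousOn (window ρ) (Icc 0 2⁻¹) := fun ρ hρ =>
    ((hC.continuousOn_measureReal hρ).comp (continuous_add_const _).continuousOn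
      fun s hs => show s + 2⁻¹ ∈ Icc (0 : ℝ) 1 from ⟨by linarith [hs.1], by linarith [hs.2]⟩).sub
      ((hC.continuousOn_measureReal hρ).mono (Icc_subset_Icc le_rfl (by norm_num)))
  have hsum : ∀ ρ : Measure Ω, window ρ 0 + window ρ 2⁻¹ = ρ.real A := fun ρ => by
    simp [window, show (2⁻¹ : ℝ) + 2⁻¹ = 1 by norm_num, hC.zero, hC.one]
  obtain ⟨s, hs, hfair⟩ : ∃ s ∈ Icc (0 : ℝ) 2⁻¹, window ρ₁ s - window ρ₂ s = 0 := by
    have hcont := (hwindow ρ₁ (Measure.le_add_right le_rfl)).sub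
      (hwindow ρ₂ (Measure.le_add_left le_rfl))
    rw [← uIcc_of_le (by norm_num : (0 : ℝ) ≤ 2⁻¹)] at hcont ⊢
    refine intermediate_value_uIcc hcont (mem_uIcc.2 ?_)
    have h₁ := hsum ρ₁
    have h₂ := hsum ρ₂
    simp only [Pi.sub_apply]
    rcases le_total (window ρ₁ 0 - window ρ₂ 0) 0 with h | h
    · exact Or.inl ⟨h, by linarith⟩
    · exact Or.inr ⟨by linarith, h⟩
  set D := C (s + 2⁻¹) \ C s
  have hwD : ∀ ρ ≤ ρ₁ + ρ₂, ρ.real D = window ρ s := fun ρ hρ =>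
    have : IsFiniteMeasure ρ := isFiniteMeasure_of_le _ hρ
    MeasureTheory.measureReal_sdiff (hC.mono (by linarith)) (hC.measurableSet s)
  have hD1 := hwD ρ₁ (Measure.le_add_right le_rfl)
  have hD2 := hwD ρ₂ (Measure.le_add_left le_rfl)
  have hμD : ρ₁.real D + ρ₂.real D = 2⁻¹ * (ρ₁.real A + ρ₂.real A) := by
    rw [← measureReal_add_apply, ← measureReal_add_apply,
      hC.measureReal_sdiff hs.1 (by linarith) (by linarith [hs.2]), add_sub_cancel_left]
  refine ⟨D, sdiff_subset.trans (hC.one ▸ hC.mono (by linarith [hs.2])),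
    (hC.measurableSet _).diff (hC.measurableSet _), by linarith, by linarith⟩

lemma measure_eq_of_measurableSet_generateFrom {μ ν : Measure Ω} [IsFiniteMeasure μ]
    {S : Set (Set Ω)} (hSm : ∀ s ∈ S, MeasurableSet s) (hS : IsPiSystem S)
    (hμν : ∀ s ∈ S, μ s = ν s) (huniv : μ univ = ν univ) {E : Set Ω}
    (hE : MeasurableSet[generateFrom S] E) : μ E = ν E := by
  have hle : generateFrom S ≤ m := generateFrom_le hSm
  have htrim : μ.trim hle = ν.trim hle := by
    refine ext_of_generate_finite S rfl hS (fun s hs => ?_) ?_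
    · rw [trim_measurableSet_eq hle (measurableSet_generateFrom hs),
        trim_measurableSet_eq hle (measurableSet_generateFrom hs), hμν s hs]
    · rw [trim_measurableSet_eq hle .univ, trim_measurableSet_eq hle .univ, huniv]
  rw [← trim_measurableSet_eq hle hE, htrim, trim_measurableSet_eq hle hE]

lemma IsProportionalChain.nonatomicOn_generateFrom {μ : Measure Ω} [IsFiniteMeasure μ]
    {C : ℝ → Set Ω} (hC : IsProportionalChain μ univ C) :
    NonatomicOn μ (generateFrom (range C)) := by
  intro E hE hpos
  have hEm : MeasurableSet E := generateFrom_le (forall_mem_range.2 hC.measurableSet) E hE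
  have hE0 : 0 < μ.real E := ENNReal.toReal_pos hpos.ne' (measure_ne_top μ E)
  obtain ⟨s, -, hs⟩ := intermediate_value_Icc zero_le_one
    (hC.continuousOn_measureReal (Measure.restrict_le_self (s := E)))
    (show μ.real E / 2 ∈ Icc _ _ by
      simp only [hC.zero, hC.one, measureReal_empty, measureReal_restrict_apply_univ]
      constructor <;> linarith)
  dsimp only at hs
  rw [measureReal_restrict_apply (hC.measurableSet s)] at hs
  refine ⟨C s ∩ E, (measurableSet_generateFrom (mem_range_self s)).inter hE, inter_subset_right,
    (ENNReal.toReal_pos_iff.1 (by rw [← measureReal_def, hs]; linarith)).1, ?_⟩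
  rw [← ENNReal.toReal_lt_toReal (measure_ne_top μ _) (measure_ne_top μ _), ← measureReal_def,
    ← measureReal_def, hs]
  linarith

end

theorem stmt12 {Ω : Type*} [m : MeasurableSpace Ω]
    (π π' : MeasureTheory.Measure Ω)
    (hπ : MeasureTheory.IsProbabilityMeasure π)
    (hπ' : MeasureTheory.IsProbabilityMeasure π')
    (hna : NonatomicOn π m) (hna' : NonatomicOn π' m) :
    ∃ m' : MeasurableSpace Ω, m' ≤ m ∧
      (∀ E : Set Ω, MeasurableSet[m'] E → π E = π' E) ∧
      @NonatomicOn Ω m π m' := by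
  obtain ⟨C, hC, hCeq⟩ := (hna.add hna').jointlyHalvable.exists_isProportionalChain
    MeasurableSet.univ (by simp)
  have hCm : ∀ s ∈ range C, MeasurableSet s := forall_mem_range.2 hC.measurableSet
  refine ⟨generateFrom (range C), generateFrom_le hCm,
    fun E => measure_eq_of_measurableSet_generateFrom hCm hC.mono.isPiSystem_range ?_ (by simp),
    hC.nonatomicOn_generateFrom⟩
  rintro _ ⟨s, rfl⟩
  exact (ENNReal.toReal_eq_toReal_iff' (measure_ne_top π _) (measure_ne_top π' _)).1 (hCeq s)
end
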